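/- arXiv:1802.02837 — 4 statements merged into one kernel-verified Lean document; each statement's English description precedes it below -/
import Mathlib

section
/- Let m ≥ n ≥ 1 be integers. For A ∈ Matrix (Fin m) (Fin n) ℂ let S(A) = {(X,Y) ∈ 𝔲(m) × 𝔲(n) : X·A = A·Y} and T(A) = {X·A − A·Y : X ∈ 𝔲(m), Y ∈ 𝔲(n)}, regarded as real vector spaces. Then the minimum over all A of dim_ℝ S(A) equals (m−n)² + n, and the maximum over all A of dim_ℝ T(A) equals 2mn − n. Equivalently, the action of U(m)×U(n) on m×n complex matrices by (g,h)·A = g A h* has principal isotropy groups of dimension dim(U(m−n)×U(1)ⁿ) and cohomogeneity n. -/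
/-!
The infinitesimal stabilizer of `A` is the kernel of the linear map `(X, Y) ↦ X A - A Y` on
`𝔲(m) × 𝔲(n)` and `T(A)` is its image, so rank–nullity gives `dim S(A) + dim T(A) = m² + n²`.
It therefore suffices to show `dim S(A) ≥ (m - n)² + n` for every `A`, with equality for the
rectangular diagonal matrix `diag(1, …, n)`.

Lower bound: choose a unitary `V` diagonalising `AᴴA`, so that `B = A V` has orthogonal columns
with squared norms `d j`. For `t ∈ ℝⁿ` the pair `(B (i diag(t / d)) Bᴴ, V (i diag t) Vᴴ)` lies
in the stabilizer, and so does `(U c Uᴴ, 0)` for `c ∈ 𝔲(r)` and an isometry `U` onto `ker Aᴴ`,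
whose dimension `r` is at least `m - n`; together they embed `𝔲(r) × ℝⁿ`.

Upper bound at the witness: `Y` commutes with `AᴴA = diag(1², …, n²)`, whose entries are
distinct, so `Y` is diagonal. If moreover `Y = 0`, then `X (A Aᴴ) = 0 = (A Aᴴ) X` with
`A Aᴴ = diag(1², …, n², 0, …, 0)`, so only the lower-right `(m - n) × (m - n)` block of `X`
survives; hence `(X, Y) ↦ (that block, Im diag Y)` is injective.
-/

open Matrix

/-- `S(A) = {(X,Y) ∈ 𝔲(m) × 𝔲(n) : X·A = A·Y}` (skew-Hermitian matrices). -/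
def stabSet1 {m n : ℕ} (A : Matrix (Fin m) (Fin n) ℂ) :
    Set (Matrix (Fin m) (Fin m) ℂ × Matrix (Fin n) (Fin n) ℂ) :=
  {p | p.1ᴴ = -p.1 ∧ p.2ᴴ = -p.2 ∧ p.1 * A = A * p.2}

/-- `T(A) = {X·A − A·Y : X ∈ 𝔲(m), Y ∈ 𝔲(n)}`. -/
def tangSet1 {m n : ℕ} (A : Matrix (Fin m) (Fin n) ℂ) :
    Set (Matrix (Fin m) (Fin n) ℂ) :=
  {B | ∃ X : Matrix (Fin m) (Fin m) ℂ, ∃ Y : Matrix (Fin n) (Fin n) ℂ,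
    Xᴴ = -X ∧ Yᴴ = -Y ∧ B = X * A - A * Y}

open Module
open scoped ComplexOrder

local notation "𝔲" ι:max => skewAdjoint.submodule ℝ (Matrix ι ι ℂ)

lemma finrank_skewAdjoint_matrix (ι : Type*) [Fintype ι] :
    finrank ℝ (𝔲 ι) = Fintype.card ι ^ 2 := by
  have : Module.Finite ℝ (selfAdjoint (Matrix ι ι ℂ)) :=
    inferInstanceAs (Module.Finite ℝ (selfAdjoint.submodule ℝ (Matrix ι ι ℂ)))
  have : Module.Finite ℝ (skewAdjoint (Matrix ι ι ℂ)) := inferInstanceAs (Module.Finite ℝ (𝔲 ι))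
  have hsum := (StarModule.decomposeProdAdjoint ℝ (Matrix ι ι ℂ)).finrank_eq
  have hI : Function.Bijective (skewAdjoint.negISMul (A := Matrix ι ι ℂ)) := by
    refine ⟨fun a b h => ?_, fun s => ⟨⟨Complex.I • (s : Matrix ι ι ℂ), by simp⟩, ?_⟩⟩
    · ext1; rw [← skewAdjoint.I_smul_neg_I a, ← skewAdjoint.I_smul_neg_I b, h]
    · ext1; simp [smul_smul]
  have hequiv := (LinearEquiv.ofBijective _ hI).finrank_eq
  rw [finrank_prod, finrank_matrix, Complex.finrank_real_complex] at hsum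
  change finrank ℝ (skewAdjoint (Matrix ι ι ℂ)) = _
  grind

lemma conjTranspose_mul_mul_conjTranspose_of_eq_neg {ι κ α : Type*} [Fintype κ] [CommRing α]
    [StarRing α] {M : Matrix κ κ α} (hM : Mᴴ = -M) (P : Matrix ι κ α) :
    (P * M * Pᴴ)ᴴ = -(P * M * Pᴴ) := by
  simp [hM, Matrix.mul_assoc]

lemma re_apply_self_eq_zero_of_conjTranspose_eq_neg {κ : Type*} {M : Matrix κ κ ℂ} (hM : Mᴴ = -M) (j : κ) :
    (M j j).re = 0 := by
  have := congrArg Complex.re (congrFun (congrFun hM j) j)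
  simp only [conjTranspose_apply, RCLike.star_def, Complex.conj_re, Matrix.neg_apply,
    Complex.neg_re] at this
  linarith

lemma apply_eq_zero_of_diagonal_mul_eq_mul_diagonal {κ R : Type*} [Fintype κ] [DecidableEq κ]
    [CommRing R] [NoZeroDivisors R] {M : Matrix κ κ R} {e : κ → R}
    (h : diagonal e * M = M * diagonal e) {i j : κ} (hij : e i ≠ e j) : M i j = 0 := by
  have := congrFun (congrFun h i) j
  rw [diagonal_mul, mul_diagonal, ← sub_eq_zero, mul_comm, ← mul_sub] at this
  exact (mul_eq_zero.mp this).resolve_right (sub_ne_zero.mpr hij)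

lemma exists_isometry_mul_eq_zero {𝕜 ι κ : Type*} [RCLike 𝕜] [Fintype ι] [Fintype κ]
    [DecidableEq ι] (M : Matrix κ ι 𝕜) :
    ∃ r, Fintype.card ι - Fintype.card κ ≤ r ∧
      ∃ U : Matrix ι (Fin r) 𝕜, Uᴴ * U = 1 ∧ M * U = 0 := by
  let b := stdOrthonormalBasis 𝕜 (LinearMap.ker (toEuclideanLin M))
  refine ⟨_, ?_, of fun i k => (b k : EuclideanSpace 𝕜 ι) i, ?_, ?_⟩
  · have := LinearMap.finrank_range_add_finrank_ker (toEuclideanLin M)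
    have := Submodule.finrank_le (LinearMap.range (toEuclideanLin M))
    simp only [finrank_euclideanSpace] at *
    omega
  · ext k l
    have := orthonormal_iff_ite.mp b.orthonormal k l
    rw [Submodule.coe_inner, EuclideanSpace.inner_eq_star_dotProduct] at this
    simpa [mul_apply, dotProduct, one_apply, mul_comm] using this
  · ext j k
    have hk : M *ᵥ WithLp.ofLp (b k : EuclideanSpace 𝕜 ι) = 0 :=
      congrArg WithLp.ofLp (LinearMap.mem_ker.mp (b k).2)
    simpa [mul_apply, mulVec, dotProduct] using congrFun hk j

lemma exists_unitary_conjTranspose_mul_self_eq_diagonal {ι κ : Type*} [Fintype ι] [Fintype κ]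
    [DecidableEq κ] (A : Matrix ι κ ℂ) :
    ∃ V ∈ unitaryGroup κ ℂ, ∃ d : κ → ℝ, (A * V)ᴴ * (A * V) = diagonal fun j => (d j : ℂ) := by
  have hH := isHermitian_conjTranspose_mul_self A
  refine ⟨_, hH.eigenvectorUnitary.2, hH.eigenvalues, ?_⟩
  have := hH.conjStarAlgAut_star_eigenvectorUnitary
  rw [Unitary.conjStarAlgAut_star_apply] at this
  simpa [conjTranspose_mul, Matrix.mul_assoc, star_eq_conjTranspose, Function.comp_def] using this

section ImagDiagonal

variable {κ : Type*} [DecidableEq κ]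

noncomputable def imagDiagonal : (κ → ℝ) →ₗ[ℝ] Matrix κ κ ℂ where
  toFun t := diagonal fun j => Complex.I * t j
  map_add' s t := by simp [diagonal_add, mul_add]
  map_smul' a t := by ext i j; by_cases h : i = j <;> simp [h, mul_left_comm]

lemma conjTranspose_imagDiagonal (t : κ → ℝ) : (imagDiagonal t)ᴴ = -imagDiagonal t := by
  simp [imagDiagonal, diagonal_conjTranspose]

lemma imagDiagonal_injective : Function.Injective (imagDiagonal (κ := κ)) := by
  intro s t h
  funext j
  simpa [imagDiagonal] using congrFun (congrFun h j) j

lemma mul_imagDiagonal_inv_mul_mul_conjTranspose_mul_self {ι : Type*} [Fintype ι] [Fintype κ]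
    {B : Matrix ι κ ℂ} {d : κ → ℝ} (hB : Bᴴ * B = diagonal fun j => (d j : ℂ)) (t : κ → ℝ) :
    B * imagDiagonal (d⁻¹ * t) * (Bᴴ * B) = B * imagDiagonal t := by
  ext i j
  -- where `d j = 0` (so that `(d⁻¹ * t) j = 0`), the column `B · j` vanishes
  have hcol : d j = 0 → B i j = 0 := fun h => by
    have : (Bᴴ * B) j j = 0 := by simp [hB, h]
    rw [mul_apply'] at this
    exact congrFun (dotProduct_star_self_eq_zero.mp this) i
  simp only [hB, imagDiagonal, LinearMap.coe_mk, AddHom.coe_mk, mul_diagonal]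
  by_cases h : d j = 0
  · simp [hcol h]
  · have : (d j : ℂ) ≠ 0 := by exact_mod_cast h
    simp only [Pi.mul_apply, Pi.inv_apply, Complex.ofReal_mul, Complex.ofReal_inv]
    field_simp

end ImagDiagonal

section InfinitesimalAction

variable {ι κ : Type*} [Fintype ι] [Fintype κ]

noncomputable def infinitesimalAction (A : Matrix ι κ ℂ) : 𝔲 ι × 𝔲 κ →ₗ[ℝ] Matrix ι κ ℂ where
  toFun p := (p.1 : Matrix ι ι ℂ) * A - A * (p.2 : Matrix κ κ ℂ)
  map_add' p q := by
    simp only [Prod.fst_add, Prod.snd_add, Submodule.coe_add, Matrix.add_mul, Matrix.mul_add]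
    rw [sub_add_sub_comm]
  map_smul' c p := by simp [smul_sub]

noncomputable def infinitesimalStabilizer (A : Matrix ι κ ℂ) :
    Submodule ℝ (Matrix ι ι ℂ × Matrix κ κ ℂ) :=
  (LinearMap.ker (infinitesimalAction A)).map ((𝔲 ι).subtype.prodMap (𝔲 κ).subtype)

lemma mem_infinitesimalStabilizer {A : Matrix ι κ ℂ} {p : Matrix ι ι ℂ × Matrix κ κ ℂ} :
    p ∈ infinitesimalStabilizer A ↔ p.1ᴴ = -p.1 ∧ p.2ᴴ = -p.2 ∧ p.1 * A = A * p.2 := by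
  constructor
  · rintro ⟨⟨X, Y⟩, hXY, rfl⟩
    exact ⟨X.2, Y.2, sub_eq_zero.mp (LinearMap.mem_ker.mp hXY)⟩
  · rintro ⟨hX, hY, hXY⟩
    exact ⟨(⟨p.1, hX⟩, ⟨p.2, hY⟩), LinearMap.mem_ker.mpr (sub_eq_zero.mpr hXY), rfl⟩

lemma finrank_infinitesimalStabilizer_add_finrank_range_infinitesimalAction
    (A : Matrix ι κ ℂ) :
    finrank ℝ (infinitesimalStabilizer A) + finrank ℝ (LinearMap.range (infinitesimalAction A)) =
      Fintype.card ι ^ 2 + Fintype.card κ ^ 2 := by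
  have hinj : Function.Injective ((𝔲 ι).subtype.prodMap (𝔲 κ).subtype) :=
    (Submodule.injective_subtype _).prodMap (Submodule.injective_subtype _)
  rw [infinitesimalStabilizer, ← (Submodule.equivMapOfInjective _ hinj _).finrank_eq, add_comm,
    LinearMap.finrank_range_add_finrank_ker, finrank_prod, finrank_skewAdjoint_matrix,
    finrank_skewAdjoint_matrix]

lemma conjTranspose_mul_eq_of_mem_infinitesimalStabilizer {A : Matrix ι κ ℂ}
    {p : Matrix ι ι ℂ × Matrix κ κ ℂ} (hp : p ∈ infinitesimalStabilizer A) :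
    Aᴴ * p.1 = p.2 * Aᴴ := by
  obtain ⟨hX, hY, hXY⟩ := mem_infinitesimalStabilizer.mp hp
  simpa [conjTranspose_mul, hX, hY] using congrArg conjTranspose hXY

lemma commute_conjTranspose_mul_self_of_mem_infinitesimalStabilizer {A : Matrix ι κ ℂ}
    {p : Matrix ι ι ℂ × Matrix κ κ ℂ} (hp : p ∈ infinitesimalStabilizer A) :
    Aᴴ * A * p.2 = p.2 * (Aᴴ * A) := by
  rw [Matrix.mul_assoc, ← (mem_infinitesimalStabilizer.mp hp).2.2, ← Matrix.mul_assoc,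
    conjTranspose_mul_eq_of_mem_infinitesimalStabilizer hp, Matrix.mul_assoc]

noncomputable def stabilizerParametrization {ρ : Type*} [Fintype ρ] [DecidableEq κ]
    (A : Matrix ι κ ℂ) (U : Matrix ι ρ ℂ) (V : Matrix κ κ ℂ) (d : κ → ℝ) :
    𝔲 ρ × (κ → ℝ) →ₗ[ℝ] Matrix ι ι ℂ × Matrix κ κ ℂ where
  toFun p := (U * (p.1 : Matrix ρ ρ ℂ) * Uᴴ + A * V * imagDiagonal (d⁻¹ * p.2) * (A * V)ᴴ,
    V * imagDiagonal p.2 * Vᴴ)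
  map_add' p q := by
    simp only [Prod.fst_add, Prod.snd_add, mul_add, map_add, Matrix.mul_add, Matrix.add_mul,
      Submodule.coe_add, Prod.mk_add_mk]
    rw [add_add_add_comm]
  map_smul' a p := by simp [Matrix.mul_smul, Matrix.smul_mul, smul_add]

lemma stabilizerParametrization_mem {ρ : Type*} [Fintype ρ] [DecidableEq κ] {A : Matrix ι κ ℂ}
    {U : Matrix ι ρ ℂ} {V : Matrix κ κ ℂ} {d : κ → ℝ} (hAU : Aᴴ * U = 0)
    (hV : V ∈ unitaryGroup κ ℂ) (hd : (A * V)ᴴ * (A * V) = diagonal fun j => (d j : ℂ))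
    (p : 𝔲 ρ × (κ → ℝ)) :
    stabilizerParametrization A U V d p ∈ infinitesimalStabilizer A := by
  obtain ⟨c, t⟩ := p
  have hUA : Uᴴ * A = 0 := by
    rw [← conjTranspose_conjTranspose A, ← conjTranspose_mul, hAU, conjTranspose_zero]
  have hVV : V * Vᴴ = 1 := mem_unitaryGroup_iff.mp hV
  have hXA : (U * (c : Matrix ρ ρ ℂ) * Uᴴ + A * V * imagDiagonal (d⁻¹ * t) * (A * V)ᴴ) * A =
      A * (V * imagDiagonal t * Vᴴ) := by
    calc _ = U * (c : Matrix ρ ρ ℂ) * (Uᴴ * A) +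
          A * V * imagDiagonal (d⁻¹ * t) * ((A * V)ᴴ * (A * V)) * Vᴴ := by
          simp only [Matrix.add_mul, Matrix.mul_assoc, hVV, Matrix.mul_one]
      _ = A * (V * imagDiagonal t * Vᴴ) := by
          rw [hUA, mul_imagDiagonal_inv_mul_mul_conjTranspose_mul_self hd]
          simp only [Matrix.mul_zero, zero_add, Matrix.mul_assoc]
  simp only [stabilizerParametrization, LinearMap.coe_mk, AddHom.coe_mk]
  refine mem_infinitesimalStabilizer.mpr ⟨?_, ?_, hXA⟩
  · rw [conjTranspose_add, conjTranspose_mul_mul_conjTranspose_of_eq_neg c.2,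
      conjTranspose_mul_mul_conjTranspose_of_eq_neg (conjTranspose_imagDiagonal _), neg_add]
  · exact conjTranspose_mul_mul_conjTranspose_of_eq_neg (conjTranspose_imagDiagonal _) V

lemma stabilizerParametrization_injective {ρ : Type*} [Fintype ρ] [DecidableEq ρ] [DecidableEq κ]
    {A : Matrix ι κ ℂ} {U : Matrix ι ρ ℂ} {V : Matrix κ κ ℂ} (d : κ → ℝ) (hU : Uᴴ * U = 1)
    (hV : V ∈ unitaryGroup κ ℂ) :
    Function.Injective (stabilizerParametrization A U V d) := by
  rw [injective_iff_map_eq_zero]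
  rintro ⟨c, t⟩ h
  obtain ⟨hX, hY⟩ := Prod.ext_iff.mp h
  simp only [stabilizerParametrization, LinearMap.coe_mk, AddHom.coe_mk, Prod.fst_zero,
    Prod.snd_zero] at hX hY
  have hVV : Vᴴ * V = 1 := mem_unitaryGroup_iff'.mp hV
  have ht : t = 0 := by
    apply imagDiagonal_injective
    simpa [Matrix.mul_assoc, hVV, ← Matrix.mul_assoc Vᴴ V] using congrArg (Vᴴ * · * V) hY
  subst ht
  have hc : (c : Matrix ρ ρ ℂ) = 0 := by
    simpa [Matrix.mul_assoc, hU, ← Matrix.mul_assoc Uᴴ U] using congrArg (Uᴴ * · * U) hX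
  exact Prod.ext (Subtype.ext hc) rfl

lemma le_finrank_infinitesimalStabilizer [DecidableEq ι] [DecidableEq κ] (A : Matrix ι κ ℂ) :
    (Fintype.card ι - Fintype.card κ) ^ 2 + Fintype.card κ ≤
      finrank ℝ (infinitesimalStabilizer A) := by
  obtain ⟨r, hr, U, hU, hAU⟩ := exists_isometry_mul_eq_zero Aᴴ
  obtain ⟨V, hV, d, hd⟩ := exists_unitary_conjTranspose_mul_self_eq_diagonal A
  have := LinearMap.finrank_le_finrank_of_injective
    (f := (stabilizerParametrization A U V d).codRestrict _
      (stabilizerParametrization_mem hAU hV hd))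
    fun p q h => stabilizerParametrization_injective d hU hV (congrArg Subtype.val h)
  rw [finrank_prod, finrank_skewAdjoint_matrix, Fintype.card_fin,
    finrank_fintype_fun_eq_card] at this
  have := Nat.pow_le_pow_left hr 2
  omega

noncomputable def stabilizerProjection (A : Matrix ι κ ℂ) (P : ι → Prop) [DecidablePred P] :
    infinitesimalStabilizer A →ₗ[ℝ] 𝔲 {i // P i} × (κ → ℝ) where
  toFun q := (⟨q.1.1.submatrix Subtype.val Subtype.val, by
      change _ᴴ = _
      rw [conjTranspose_submatrix, (mem_infinitesimalStabilizer.mp q.2).1]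
      rfl⟩,
    fun j => (q.1.2 j j).im)
  map_add' q q' := rfl
  map_smul' a q := Prod.ext rfl (funext fun j => by simp)

lemma stabilizerProjection_injective [DecidableEq ι] [DecidableEq κ] {A : Matrix ι κ ℂ}
    {e : κ → ℂ} (he : Function.Injective e) (hAA : Aᴴ * A = diagonal e)
    {d : ι → ℂ} (hAA' : A * Aᴴ = diagonal d) (P : ι → Prop) [DecidablePred P]
    (hP : ∀ i, ¬ P i → d i ≠ 0) :
    Function.Injective (stabilizerProjection A P) := by
  rw [injective_iff_map_eq_zero]
  rintro ⟨⟨X, Y⟩, hq⟩ h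
  obtain ⟨-, hY, hXY⟩ : Xᴴ = -X ∧ Yᴴ = -Y ∧ X * A = A * Y := mem_infinitesimalStabilizer.mp hq
  have hXL : X.submatrix (Subtype.val : {i // P i} → ι) Subtype.val = 0 :=
    congrArg (fun r => (r.1 : Matrix {i // P i} {i // P i} ℂ)) h
  have hYd : ∀ j, (Y j j).im = 0 := fun j => congrFun (congrArg Prod.snd h) j
  have hY0 : Y = 0 := by
    ext i j
    by_cases hij : i = j
    · subst hij
      exact Complex.ext (re_apply_self_eq_zero_of_conjTranspose_eq_neg hY i) (hYd i)
    · have := commute_conjTranspose_mul_self_of_mem_infinitesimalStabilizer hq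
      rw [hAA] at this
      exact apply_eq_zero_of_diagonal_mul_eq_mul_diagonal this (he.ne hij)
  subst hY0
  have hright : X * diagonal d = 0 := by
    rw [← hAA', ← Matrix.mul_assoc, hXY, Matrix.mul_zero, Matrix.zero_mul]
  have hleft : diagonal d * X = 0 := by
    rw [← hAA', Matrix.mul_assoc, conjTranspose_mul_eq_of_mem_infinitesimalStabilizer hq,
      Matrix.zero_mul, Matrix.mul_zero]
  have hX0 : X = 0 := by
    ext i j
    by_cases hi : P i
    · by_cases hj : P j
      · exact congrFun (congrFun hXL ⟨i, hi⟩) ⟨j, hj⟩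
      · simpa [hP j hj] using congrFun (congrFun hright i) j
    · simpa [hP i hi] using congrFun (congrFun hleft i) j
  subst hX0
  rfl

lemma finrank_infinitesimalStabilizer_le [DecidableEq ι] [DecidableEq κ] {A : Matrix ι κ ℂ}
    {e : κ → ℂ} (he : Function.Injective e) (hAA : Aᴴ * A = diagonal e)
    {d : ι → ℂ} (hAA' : A * Aᴴ = diagonal d) (P : ι → Prop) [DecidablePred P]
    (hP : ∀ i, ¬ P i → d i ≠ 0) :
    finrank ℝ (infinitesimalStabilizer A) ≤ Fintype.card {i // P i} ^ 2 + Fintype.card κ := by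
  have := LinearMap.finrank_le_finrank_of_injective
    (stabilizerProjection_injective he hAA hAA' P hP)
  rwa [finrank_prod, finrank_skewAdjoint_matrix, finrank_fintype_fun_eq_card] at this

end InfinitesimalAction

def witness (m n : ℕ) : Matrix (Fin m) (Fin n) ℂ :=
  of fun i k => if (i : ℕ) = k then ((k : ℕ) + 1 : ℂ) else 0

section Witness

variable {m n : ℕ}

lemma conjTranspose_witness_mul_witness (hnm : n ≤ m) :
    (witness m n)ᴴ * witness m n = diagonal fun k : Fin n => (((k : ℕ) + 1) ^ 2 : ℂ) := by
  ext k l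
  rw [mul_apply, Finset.sum_eq_single (Fin.castLE hnm k)]
  · by_cases h : k = l
    · subst h; simp [witness, sq]
    · simp [witness, Fin.val_eq_val, h]
  · intro i _ hi
    have : (i : ℕ) ≠ k := fun h => hi (Fin.ext h)
    simp [witness, this]
  · simp

lemma witness_mul_conjTranspose_witness :
    witness m n * (witness m n)ᴴ =
      diagonal fun i : Fin m => if (i : ℕ) < n then (((i : ℕ) + 1) ^ 2 : ℂ) else 0 := by
  ext i j
  rw [mul_apply]
  by_cases hi : (i : ℕ) < n
  · rw [Finset.sum_eq_single ⟨i, hi⟩]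
    · by_cases h : i = j
      · subst h; simp [witness, hi, sq]
      · simp [witness, Fin.val_eq_val, h, Ne.symm h]
    · intro k _ hk
      have : (i : ℕ) ≠ k := fun h => hk (Fin.ext h.symm)
      simp [witness, this]
    · simp
  · rw [Finset.sum_eq_zero]
    · by_cases h : i = j
      · subst h; simp [hi]
      · simp [diagonal_apply_ne _ h]
    · intro k _
      have : (i : ℕ) ≠ k := fun h => hi (h ▸ k.2)
      simp [witness, this]

lemma finrank_infinitesimalStabilizer_witness_le (hnm : n ≤ m) :
    finrank ℝ (infinitesimalStabilizer (witness m n)) ≤ (m - n) ^ 2 + n := by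
  have he : Function.Injective fun k : Fin n => (((k : ℕ) + 1) ^ 2 : ℂ) := fun k l h => by
    have : ((k : ℕ) + 1) ^ 2 = ((l : ℕ) + 1) ^ 2 := by simp only at h; exact_mod_cast h
    exact Fin.ext (by simpa using Nat.pow_left_injective two_ne_zero this)
  have := finrank_infinitesimalStabilizer_le he (conjTranspose_witness_mul_witness hnm)
    witness_mul_conjTranspose_witness (fun i => ¬ (i : ℕ) < n)
    fun i hi => by
      simp only [not_not] at hi
      simpa [hi] using Nat.cast_add_one_ne_zero (R := ℂ) (i : ℕ)
  rwa [Fintype.card_subtype_compl, Fintype.card_subtype, Fin.card_filter_val_lt,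
    Fintype.card_fin, Fintype.card_fin, min_eq_right hnm] at this

end Witness

section Span

variable {m n : ℕ}

lemma span_stabSet1 (A : Matrix (Fin m) (Fin n) ℂ) :
    Submodule.span ℝ (stabSet1 A) = infinitesimalStabilizer A := by
  rw [← Submodule.span_eq (infinitesimalStabilizer A)]
  congr 1
  ext p
  exact mem_infinitesimalStabilizer.symm

lemma span_tangSet1 (A : Matrix (Fin m) (Fin n) ℂ) :
    Submodule.span ℝ (tangSet1 A) = LinearMap.range (infinitesimalAction A) := by
  rw [← Submodule.span_eq (LinearMap.range (infinitesimalAction A))]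
  congr 1
  ext B
  constructor
  · rintro ⟨X, Y, hX, hY, rfl⟩
    exact ⟨(⟨X, hX⟩, ⟨Y, hY⟩), rfl⟩
  · rintro ⟨⟨X, Y⟩, rfl⟩
    exact ⟨X, Y, X.2, Y.2, rfl⟩

lemma finrank_span_stabSet1_add_finrank_span_tangSet1 (A : Matrix (Fin m) (Fin n) ℂ) :
    finrank ℝ (Submodule.span ℝ (stabSet1 A)) + finrank ℝ (Submodule.span ℝ (tangSet1 A)) =
      m ^ 2 + n ^ 2 := by
  rw [span_stabSet1, span_tangSet1]
  simpa using finrank_infinitesimalStabilizer_add_finrank_range_infinitesimalAction A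

lemma le_finrank_span_stabSet1 (A : Matrix (Fin m) (Fin n) ℂ) :
    (m - n) ^ 2 + n ≤ finrank ℝ (Submodule.span ℝ (stabSet1 A)) := by
  rw [span_stabSet1]
  simpa using le_finrank_infinitesimalStabilizer A

lemma finrank_span_stabSet1_witness (hnm : n ≤ m) :
    finrank ℝ (Submodule.span ℝ (stabSet1 (witness m n))) = (m - n) ^ 2 + n :=
  le_antisymm (span_stabSet1 (witness m n) ▸ finrank_infinitesimalStabilizer_witness_le hnm)
    (le_finrank_span_stabSet1 _)

end Span

theorem stmt1_general (m n : ℕ) (hmn : n ≤ m) :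
    IsLeast {d : ℕ | ∃ A : Matrix (Fin m) (Fin n) ℂ,
        d = Module.finrank ℝ (Submodule.span ℝ (stabSet1 A))}
      ((m - n) ^ 2 + n) ∧
    IsGreatest {d : ℕ | ∃ A : Matrix (Fin m) (Fin n) ℂ,
        d = Module.finrank ℝ (Submodule.span ℝ (tangSet1 A))}
      (2 * m * n - n) := by
  have harith : (m - n) ^ 2 + n + (2 * m * n - n) = m ^ 2 + n ^ 2 := by
    have : n ≤ 2 * m * n := by nlinarith [Nat.le_mul_self n]
    zify [hmn, this]
    ring
  refine ⟨⟨⟨witness m n, (finrank_span_stabSet1_witness hmn).symm⟩, ?_⟩, ⟨witness m n, ?_⟩, ?_⟩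
  · rintro d ⟨A, rfl⟩
    exact le_finrank_span_stabSet1 A
  · have := finrank_span_stabSet1_add_finrank_span_tangSet1 (witness m n)
    rw [finrank_span_stabSet1_witness hmn] at this
    omega
  · rintro d ⟨A, rfl⟩
    have := finrank_span_stabSet1_add_finrank_span_tangSet1 A
    have := le_finrank_span_stabSet1 A
    omega

theorem stmt1 (m n : ℕ) (hn : 1 ≤ n) (hmn : n ≤ m) :
    IsLeast {d : ℕ | ∃ A : Matrix (Fin m) (Fin n) ℂ,
        d = Module.finrank ℝ (Submodule.span ℝ (stabSet1 A))}
      ((m - n) ^ 2 + n) ∧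
    IsGreatest {d : ℕ | ∃ A : Matrix (Fin m) (Fin n) ℂ,
        d = Module.finrank ℝ (Submodule.span ℝ (tangSet1 A))}
      (2 * m * n - n) :=
  stmt1_general m n hmn
end

section
/- Let V₁ and V₂ be finite-dimensional real inner product spaces and let G be a compact (closed) subgroup of O(V₁) × O(V₂), acting on V₁ ⊕ V₂ componentwise. Suppose p₁ ∈ V₁ is a principal point for the induced G-action on V₁, let H₁ = Stab_G(p₁) (the stabilizer of p₁ for the action on V₁), and suppose p₂ ∈ V₂ is a principal point for the induced H₁-action on V₂. Then (p₁, p₂) is a principal point for the G-action on V₁ ⊕ V₂, and Stab_G((p₁,p₂)) = Stab_{H₁}(p₂). In particular, a principal isotropy group of (G, V₁ ⊕ V₂) coincides with a principal isotropy group of (H₁, V₂). -/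
theorem stmt13 (V₁ V₂ : Type*)
    [NormedAddCommGroup V₁] [InnerProductSpace ℝ V₁] [FiniteDimensional ℝ V₁]
    [NormedAddCommGroup V₂] [InnerProductSpace ℝ V₂] [FiniteDimensional ℝ V₂]
    -- `G` is a compact (closed) subgroup of `O(V₁) × O(V₂)`:
    (G : Subgroup ((V₁ ≃ₗᵢ[ℝ] V₁) × (V₂ ≃ₗᵢ[ℝ] V₂)))
    (hGclosed : IsClosed {F : (V₁ →L[ℝ] V₁) × (V₂ →L[ℝ] V₂) | ∃ g ∈ G,
      F = (g.1.toLinearIsometry.toContinuousLinearMap,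
           g.2.toLinearIsometry.toContinuousLinearMap)})
    (p₁ : V₁)
    -- `p₁` is a principal point for the `G`-action on `V₁` (via the first projection):
    (hp₁ : ∀ q₁ : V₁, ∃ g ∈ G, ∀ h ∈ G, h.1 p₁ = p₁ →
      (g * h * g⁻¹ ∈ G ∧ (g * h * g⁻¹).1 q₁ = q₁))
    (p₂ : V₂)
    -- `p₂` is a principal point for the action on `V₂` of `H₁ = Stab_G(p₁)`:
    (hp₂ : ∀ q₂ : V₂, ∃ g, (g ∈ G ∧ g.1 p₁ = p₁) ∧
      ∀ h, (h ∈ G ∧ h.1 p₁ = p₁) → h.2 p₂ = p₂ →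
        ((g * h * g⁻¹ ∈ G ∧ (g * h * g⁻¹).1 p₁ = p₁) ∧ (g * h * g⁻¹).2 q₂ = q₂)) :
    -- `(p₁, p₂)` is a principal point for the `G`-action on `V₁ ⊕ V₂`, and
    -- `Stab_G((p₁,p₂)) = Stab_{H₁}(p₂)`:
    (∀ q : V₁ × V₂, ∃ g ∈ G, ∀ h ∈ G, (h.1 p₁ = p₁ ∧ h.2 p₂ = p₂) →
      (g * h * g⁻¹ ∈ G ∧ (g * h * g⁻¹).1 q.1 = q.1 ∧ (g * h * g⁻¹).2 q.2 = q.2)) ∧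
    {g : (V₁ ≃ₗᵢ[ℝ] V₁) × (V₂ ≃ₗᵢ[ℝ] V₂) | g ∈ G ∧ (g.1 p₁ = p₁ ∧ g.2 p₂ = p₂)} =
      {g : (V₁ ≃ₗᵢ[ℝ] V₁) × (V₂ ≃ₗᵢ[ℝ] V₂) | (g ∈ G ∧ g.1 p₁ = p₁) ∧ g.2 p₂ = p₂} := by
  constructor
  · intro q
    obtain ⟨a, haG, ha⟩ := hp₁ q.1
    obtain ⟨b, ⟨hbG, hbp₁⟩, hb⟩ := hp₂ (a⁻¹.2 q.2)
    refine ⟨a * b, mul_mem haG hbG, ?_⟩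
    rintro h hhG ⟨hh1, hh2⟩
    obtain ⟨⟨hmem, hfix1⟩, hfix2⟩ := hb h ⟨hhG, hh1⟩ hh2
    obtain ⟨hmem', hq1⟩ := ha (b * h * b⁻¹) hmem hfix1
    have key : a * b * h * (a * b)⁻¹ = a * (b * h * b⁻¹) * a⁻¹ := by group
    rw [key]
    refine ⟨hmem', hq1, ?_⟩
    have : (a * (b * h * b⁻¹) * a⁻¹).2 q.2
        = a.2 ((b * h * b⁻¹).2 (a⁻¹.2 q.2)) := rfl
    rw [this, hfix2]
    show (a.2 * a⁻¹.2) q.2 = q.2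
    have : a.2 * a⁻¹.2 = (a * a⁻¹).2 := rfl
    rw [this, mul_inv_cancel]
    rfl
  · ext g
    simp only [Set.mem_setOf_eq, and_assoc]
end

section
/- Let m ≥ 2 be an integer. For A ∈ Matrix (Fin m) (Fin m) ℂ let S(A) = {(X,Y) ∈ 𝔰𝔲(m) × 𝔰𝔲(m) : X·A = A·Y} and T(A) = {X·A − A·Y : X, Y ∈ 𝔰𝔲(m)}, regarded as real vector spaces. Then the minimum over all A of dim_ℝ S(A) equals m−1, and the maximum over all A of dim_ℝ T(A) equals 2m² − (m+1). Equivalently, the action of SU(m)×SU(m) on ℂᵐ ⊗_ℂ ℂᵐ (realized as m×m complex matrices with (g,h)·A = g A h*) has cohomogeneity m+1; in particular, for m = 5, 6, 7 this representation has cohomogeneity 6, 7, 8 respectively. -/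
open Matrix

/-- `S(A) = {(X,Y) ∈ 𝔰𝔲(m) × 𝔰𝔲(m) : X·A = A·Y}` (traceless skew-Hermitian matrices). -/
def stabSet17 {m : ℕ} (A : Matrix (Fin m) (Fin m) ℂ) :
    Set (Matrix (Fin m) (Fin m) ℂ × Matrix (Fin m) (Fin m) ℂ) :=
  {p | p.1ᴴ = -p.1 ∧ p.1.trace = 0 ∧ p.2ᴴ = -p.2 ∧ p.2.trace = 0 ∧ p.1 * A = A * p.2}

/-- `T(A) = {X·A − A·Y : X, Y ∈ 𝔰𝔲(m)}`. -/
def tangSet17 {m : ℕ} (A : Matrix (Fin m) (Fin m) ℂ) :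
    Set (Matrix (Fin m) (Fin m) ℂ) :=
  {B | ∃ X Y : Matrix (Fin m) (Fin m) ℂ,
    Xᴴ = -X ∧ X.trace = 0 ∧ Yᴴ = -Y ∧ Y.trace = 0 ∧ B = X * A - A * Y}

/-!
By rank–nullity for `(X, Y) ↦ X * A - A * Y` on `𝔰𝔲(m) × 𝔰𝔲(m)`, `dim T(A) + dim S(A) = 2(m² - 1)`,
so both claims say that `dim S(A) ≥ m - 1` for every `A`, with equality at `A = diag(1, …, m)`.

Lower bound: write `A Aᴴ = U diag(d) Uᴴ` with `U` unitary. Then `B = Uᴴ A` has orthogonal rows of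
squared lengths `d j`, and for every real `c` with `∑ c = 0` the matrix `X = U (i diag c) Uᴴ` of
`𝔰𝔲(m)` satisfies `X A = A Y` with `Y = Bᴴ (i diag (c / d)) B` skew-Hermitian. When `A` is singular
the trace of `Y` is corrected by a multiple of `i - Bᴴ (i diag (1 / d)) B`, which `B` annihilates.
Hence the first projection of `S(A)` has dimension at least `m - 1`.

Upper bound: for `D = diag(d)` with distinct positive `d j`, the entries of `X D = D Y` and of its
conjugate transpose give `(d i ^ 2 - d j ^ 2) Y i j = 0`, so `X = Y` is diagonal.
-/

open Module
open scoped ComplexOrder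

theorem skewAdjoint.negISMul_bijective {A : Type*} [AddCommGroup A] [Module ℂ A]
    [StarAddMonoid A] [StarModule ℂ A] :
    Function.Bijective (skewAdjoint.negISMul (A := A)) := by
  refine ⟨fun a b h => ?_, fun a => ⟨⟨Complex.I • (a : A), by simp⟩, ?_⟩⟩
  · have := congrArg (fun x : selfAdjoint A => Complex.I • (x : A)) h
    simpa [smul_smul] using this
  · ext; simp [smul_smul]

theorem Submodule.finrank_prod {K V W : Type*} [DivisionRing K] [AddCommGroup V] [Module K V]
    [AddCommGroup W] [Module K W] [FiniteDimensional K V] [FiniteDimensional K W]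
    (p : Submodule K V) (q : Submodule K W) :
    finrank K (p.prod q) = finrank K p + finrank K q := by
  let e : p.prod q ≃ₗ[K] p × q :=
    { toFun x := (⟨x.1.1, x.2.1⟩, ⟨x.1.2, x.2.2⟩)
      invFun y := ⟨(y.1, y.2), y.1.2, y.2.2⟩
      map_add' _ _ := rfl
      map_smul' _ _ := rfl
      left_inv _ := rfl
      right_inv _ := rfl }
  rw [e.finrank_eq, Module.finrank_prod]

theorem Submodule.finrank_map_add_finrank_inf_ker {K V W : Type*} [DivisionRing K]
    [AddCommGroup V] [Module K V] [AddCommGroup W] [Module K W] [FiniteDimensional K V]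
    (p : Submodule K V) (f : V →ₗ[K] W) :
    finrank K (p.map f) + finrank K ↥(p ⊓ LinearMap.ker f) = finrank K p := by
  have hrn := LinearMap.finrank_range_add_finrank_ker (f.domRestrict p)
  rwa [LinearMap.range_domRestrict, LinearMap.ker_domRestrict,
    ← Submodule.finrank_map_subtype_eq, Submodule.map_comap_subtype] at hrn

section

variable {n : Type*} [Fintype n]

theorem finrank_skewAdjoint_matrix_s17 :
    finrank ℝ (skewAdjoint.submodule ℝ (Matrix n n ℂ)) = Fintype.card n ^ 2 := by
  change finrank ℝ (skewAdjoint (Matrix n n ℂ)) = _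
  have : Module.Finite ℝ (selfAdjoint (Matrix n n ℂ)) :=
    inferInstanceAs (Module.Finite ℝ (selfAdjoint.submodule ℝ (Matrix n n ℂ)))
  have : Module.Finite ℝ (skewAdjoint (Matrix n n ℂ)) :=
    inferInstanceAs (Module.Finite ℝ (skewAdjoint.submodule ℝ (Matrix n n ℂ)))
  have hsum := (StarModule.decomposeProdAdjoint ℝ (Matrix n n ℂ)).finrank_eq
  have hswap := (LinearEquiv.ofBijective _
    (skewAdjoint.negISMul_bijective (A := Matrix n n ℂ))).finrank_eq
  rw [finrank_prod, finrank_matrix, Complex.finrank_real_complex, ← hswap] at hsum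
  linarith

variable (n) in
noncomputable def su : Submodule ℝ (Matrix n n ℂ) :=
  skewAdjoint.submodule ℝ (Matrix n n ℂ) ⊓
    LinearMap.ker ((traceLinearMap n ℂ ℂ).restrictScalars ℝ)

theorem mem_su {X : Matrix n n ℂ} : X ∈ su n ↔ Xᴴ = -X ∧ X.trace = 0 := Iff.rfl

theorem su_le_skewAdjoint : su n ≤ skewAdjoint.submodule ℝ (Matrix n n ℂ) := inf_le_left

theorem re_trace_eq_zero {X : Matrix n n ℂ} (hX : Xᴴ = -X) : X.trace.re = 0 := by
  have h := congrArg (fun M => (trace M).re) hX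
  simp only [trace_conjTranspose, trace_neg, Complex.star_def, Complex.conj_re,
    Complex.neg_re] at h
  linarith

variable (n) in
noncomputable def imTrace : Matrix n n ℂ →ₗ[ℝ] ℝ :=
  Complex.imLm ∘ₗ (traceLinearMap n ℂ ℂ).restrictScalars ℝ

theorem comap_su_eq_ker_imTrace :
    (su n).comap (skewAdjoint.submodule ℝ _).subtype =
      LinearMap.ker ((imTrace n).domRestrict (skewAdjoint.submodule ℝ _)) := by
  ext ⟨X, hX⟩
  have hX' : Xᴴ = -X := hX
  simp [mem_su, imTrace, Complex.ext_iff, re_trace_eq_zero hX', hX']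

theorem imTrace_domRestrict_surjective [Nonempty n] :
    Function.Surjective ((imTrace n).domRestrict (skewAdjoint.submodule ℝ (Matrix n n ℂ))) := by
  classical
  intro r
  refine ⟨⟨(r / Fintype.card n : ℝ) • Complex.I • 1, ?_⟩, ?_⟩
  · show _ ∈ skewAdjoint (Matrix n n ℂ)
    simp [skewAdjoint.mem_iff, star_smul]
  · simp [imTrace, Fintype.card_ne_zero]

theorem finrank_su [Nonempty n] : finrank ℝ (su n) = Fintype.card n ^ 2 - 1 := by
  have hrn := LinearMap.finrank_range_add_finrank_ker
    ((imTrace n).domRestrict (skewAdjoint.submodule ℝ (Matrix n n ℂ)))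
  rw [LinearMap.range_eq_top.2 imTrace_domRestrict_surjective, finrank_top, finrank_self,
    ← comap_su_eq_ker_imTrace, finrank_skewAdjoint_matrix_s17,
    (Submodule.comapSubtypeEquivOfLe su_le_skewAdjoint).finrank_eq] at hrn
  omega

variable (n) in
noncomputable def sumZero : Submodule ℝ (n → ℝ) :=
  LinearMap.ker (Fintype.linearCombination ℝ fun _ : n => (1 : ℝ))

theorem mem_sumZero {c : n → ℝ} : c ∈ sumZero n ↔ ∑ j, c j = 0 := by
  simp [sumZero, Fintype.linearCombination_apply]

theorem finrank_sumZero [Nonempty n] : finrank ℝ (sumZero n) = Fintype.card n - 1 := by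
  have hrn := LinearMap.finrank_range_add_finrank_ker
    (Fintype.linearCombination ℝ fun _ : n => (1 : ℝ))
  have hsurj : Function.Surjective (Fintype.linearCombination ℝ fun _ : n => (1 : ℝ)) :=
    fun r => ⟨fun _ => r / Fintype.card n, by
      simp [Fintype.linearCombination_apply, mul_div_cancel₀, Fintype.card_ne_zero]⟩
  rw [LinearMap.range_eq_top.2 hsurj, finrank_top, finrank_self, finrank_fintype_fun_eq_card]
    at hrn
  rw [sumZero]
  omega

end

section

variable {n : Type*} [DecidableEq n]

variable (n) in
noncomputable def imDiagonal : (n → ℝ) →ₗ[ℝ] Matrix n n ℂ where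
  toFun c := diagonal fun j => (c j : ℂ) * Complex.I
  map_add' c c' := by simp [add_mul]
  map_smul' r c := by ext i j; by_cases h : i = j <;> simp [h, mul_assoc]

theorem imDiagonal_apply (c : n → ℝ) :
    imDiagonal n c = diagonal fun j => (c j : ℂ) * Complex.I := rfl

theorem conjTranspose_imDiagonal (c : n → ℝ) : (imDiagonal n c)ᴴ = -imDiagonal n c := by
  simp [imDiagonal_apply, diagonal_conjTranspose]

theorem imDiagonal_injective : Function.Injective (imDiagonal n) := by
  intro c c' h
  funext j
  simpa [imDiagonal_apply] using congrFun (congrFun h j) j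

theorem imDiagonal_one : imDiagonal n 1 = Complex.I • 1 := by
  ext i j; by_cases h : i = j <;> simp [imDiagonal_apply, h]

theorem trace_imDiagonal [Fintype n] (c : n → ℝ) :
    (imDiagonal n c).trace = ((∑ j, c j : ℝ) : ℂ) * Complex.I := by
  simp [imDiagonal_apply, Finset.sum_mul]

end

section

variable {n : Type*} [Fintype n]

noncomputable def intertwiner (A : Matrix n n ℂ) :
    Matrix n n ℂ × Matrix n n ℂ →ₗ[ℝ] Matrix n n ℂ :=
  LinearMap.mulRight ℝ A ∘ₗ LinearMap.fst ℝ _ _ - LinearMap.mulLeft ℝ A ∘ₗ LinearMap.snd ℝ _ _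

theorem intertwiner_apply (A : Matrix n n ℂ) (p : Matrix n n ℂ × Matrix n n ℂ) :
    intertwiner A p = p.1 * A - A * p.2 := rfl

noncomputable def lieStabilizer (A : Matrix n n ℂ) :
    Submodule ℝ (Matrix n n ℂ × Matrix n n ℂ) :=
  (su n).prod (su n) ⊓ LinearMap.ker (intertwiner A)

theorem mem_lieStabilizer {A : Matrix n n ℂ} {p : Matrix n n ℂ × Matrix n n ℂ} :
    p ∈ lieStabilizer A ↔ p.1 ∈ su n ∧ p.2 ∈ su n ∧ p.1 * A = A * p.2 := by
  simp [lieStabilizer, intertwiner_apply, sub_eq_zero, and_assoc]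

theorem finrank_map_intertwiner_add_finrank_lieStabilizer [Nonempty n] (A : Matrix n n ℂ) :
    finrank ℝ (((su n).prod (su n)).map (intertwiner A)) + finrank ℝ (lieStabilizer A) =
      2 * (Fintype.card n ^ 2 - 1) := by
  rw [lieStabilizer, Submodule.finrank_map_add_finrank_inf_ker, Submodule.finrank_prod,
    finrank_su]
  ring

theorem row_eq_zero_of_mul_conjTranspose_self_apply {B : Matrix n n ℂ} {j : n}
    (h : (B * Bᴴ) j j = 0) : B j = 0 := by
  rw [mul_apply'] at h
  exact dotProduct_self_star_eq_zero.1 h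

theorem exists_mem_su_mul_eq_of_trace_ne_zero {X B Y₀ Z : Matrix n n ℂ} (hY₀ : Y₀ᴴ = -Y₀)
    (hXY₀ : X * B = B * Y₀) (hZ : Zᴴ = -Z) (hBZ : B * Z = 0) (htr : Z.trace ≠ 0) :
    ∃ Y ∈ su n, X * B = B * Y := by
  have hZim : Z.trace.im ≠ 0 := fun h => htr (Complex.ext (re_trace_eq_zero hZ) h)
  refine ⟨Y₀ - (Y₀.trace.im / Z.trace.im) • Z, ⟨?_, ?_⟩, ?_⟩
  · show (_ - _)ᴴ = -(_ - _)
    rw [conjTranspose_sub, conjTranspose_smul, hY₀, hZ, star_trivial, smul_neg, neg_sub_neg,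
      neg_sub]
  · show (Y₀ - _).trace = 0
    apply Complex.ext <;>
      simp [trace_sub, trace_smul, re_trace_eq_zero hY₀, re_trace_eq_zero hZ, hZim]
  · rw [Matrix.mul_sub, Matrix.mul_smul, hBZ, smul_zero, sub_zero, hXY₀]

variable [DecidableEq n]

theorem imDiagonal_mem_su {c : n → ℝ} (hc : ∑ j, c j = 0) : imDiagonal n c ∈ su n :=
  ⟨conjTranspose_imDiagonal c, by simp [trace_imDiagonal, hc]⟩

theorem conjTranspose_mul_imDiagonal_mul (B : Matrix n n ℂ) (w : n → ℝ) :
    (Bᴴ * imDiagonal n w * B)ᴴ = -(Bᴴ * imDiagonal n w * B) := by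
  simp [conjTranspose_mul, conjTranspose_imDiagonal, Matrix.mul_assoc]

section

variable {B : Matrix n n ℂ} {d : n → ℝ} (hB : B * Bᴴ = diagonal fun j => (d j : ℂ))
include hB

/-- Where `d j = 0`, `c j / d j` is a junk value, but there row `j` of `B` vanishes. -/
theorem imDiagonal_mul_eq_mul (c : n → ℝ) :
    imDiagonal n c * B = B * (Bᴴ * imDiagonal n (c / d) * B) := by
  simp only [← Matrix.mul_assoc, hB, imDiagonal_apply, diagonal_mul_diagonal]
  ext i k
  simp only [diagonal_mul, Pi.div_apply]
  by_cases hd : d i = 0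
  · have : B i = 0 := row_eq_zero_of_mul_conjTranspose_self_apply (by simp [hB, hd])
    simp [this]
  · push_cast
    field_simp

theorem trace_conjTranspose_mul_imDiagonal_mul (w : n → ℝ) :
    (Bᴴ * imDiagonal n w * B).trace = ((∑ j, w j * d j : ℝ) : ℂ) * Complex.I := by
  rw [trace_mul_cycle, hB, imDiagonal_apply, diagonal_mul_diagonal, trace_diagonal]
  push_cast
  rw [Finset.sum_mul]
  exact Finset.sum_congr rfl fun j _ => by ring

theorem exists_mem_su_imDiagonal_mul_eq {c : n → ℝ} (hc : ∑ j, c j = 0) :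
    ∃ Y ∈ su n, imDiagonal n c * B = B * Y := by
  by_cases hd : ∀ j, d j ≠ 0
  · refine ⟨Bᴴ * imDiagonal n (c / d) * B, ⟨conjTranspose_mul_imDiagonal_mul B _, ?_⟩,
      imDiagonal_mul_eq_mul hB c⟩
    show trace _ = 0
    rw [trace_conjTranspose_mul_imDiagonal_mul hB]
    simp [div_mul_cancel₀ _ (hd _), hc]
  push Not at hd
  obtain ⟨j₀, hj₀⟩ := hd
  -- `Z` has trace `i · #{j | d j = 0}`.
  refine exists_mem_su_mul_eq_of_trace_ne_zero (conjTranspose_mul_imDiagonal_mul B _)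
    (imDiagonal_mul_eq_mul hB c) (Z := Complex.I • 1 - Bᴴ * imDiagonal n (1 / d) * B)
    ?_ ?_ ?_
  · rw [conjTranspose_sub, conjTranspose_mul_imDiagonal_mul, conjTranspose_smul,
      conjTranspose_one, Complex.star_def, Complex.conj_I, neg_smul]
    abel
  · rw [Matrix.mul_sub, ← imDiagonal_mul_eq_mul hB, imDiagonal_one]
    simp
  · have hlt : ∑ j, (1 / d) j * d j < ∑ _j : n, (1 : ℝ) := by
      refine Finset.sum_lt_sum (fun j _ => ?_) ⟨j₀, Finset.mem_univ _, by simp [hj₀]⟩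
      rcases eq_or_ne (d j) 0 with h | h <;> simp [h]
    rw [trace_sub, trace_conjTranspose_mul_imDiagonal_mul hB, trace_smul, trace_one,
      show Complex.I • (Fintype.card n : ℂ) = ((∑ _j : n, (1 : ℝ) : ℝ) : ℂ) * Complex.I by
        simp [mul_comm], ← sub_mul, ← Complex.ofReal_sub]
    exact mul_ne_zero (Complex.ofReal_ne_zero.2 (sub_pos.2 hlt).ne') Complex.I_ne_zero

end

theorem exists_unitary_gram_eq_diagonal (A : Matrix n n ℂ) :
    ∃ U ∈ unitaryGroup n ℂ, ∃ d : n → ℝ,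
      (star U * A) * (star U * A)ᴴ = diagonal fun j => (d j : ℂ) := by
  have hH := isHermitian_mul_conjTranspose_self A
  refine ⟨hH.eigenvectorUnitary, hH.eigenvectorUnitary.2, hH.eigenvalues, ?_⟩
  have := hH.conjStarAlgAut_star_eigenvectorUnitary
  rw [Unitary.conjStarAlgAut_apply, Unitary.coe_star, star_star] at this
  rw [conjTranspose_mul, ← star_eq_conjTranspose (star _), star_star]
  convert this using 1
  · simp only [Matrix.mul_assoc]
  · rfl

theorem unitary_conj_mem_su {U : Matrix n n ℂ} (hU : U ∈ unitaryGroup n ℂ)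
    {X : Matrix n n ℂ} (hX : X ∈ su n) : U * X * star U ∈ su n := by
  refine ⟨?_, ?_⟩
  · show (U * X * star U)ᴴ = -(U * X * star U)
    simp [conjTranspose_mul, star_eq_conjTranspose, (mem_su.1 hX).1, Matrix.mul_assoc]
  · show trace (U * X * star U) = 0
    rw [trace_mul_cycle, Unitary.star_mul_self_of_mem hU, Matrix.one_mul, (mem_su.1 hX).2]

theorem card_sub_one_le_finrank_lieStabilizer [Nonempty n] (A : Matrix n n ℂ) :
    Fintype.card n - 1 ≤ finrank ℝ (lieStabilizer A) := by
  obtain ⟨U, hU, d, hB⟩ := exists_unitary_gram_eq_diagonal A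
  let conjU : Matrix n n ℂ →ₗ[ℝ] Matrix n n ℂ :=
    LinearMap.mulLeft ℝ U ∘ₗ LinearMap.mulRight ℝ (star U)
  have hconjU : Function.Injective conjU := by
    refine Function.LeftInverse.injective (g := fun M => star U * M * U) fun X => ?_
    simp only [conjU, LinearMap.comp_apply, LinearMap.mulLeft_apply, LinearMap.mulRight_apply]
    rw [← Matrix.mul_assoc, ← Matrix.mul_assoc, Unitary.star_mul_self_of_mem hU, Matrix.one_mul,
      Matrix.mul_assoc, Unitary.star_mul_self_of_mem hU, Matrix.mul_one]
  have hle : (sumZero n).map (conjU ∘ₗ imDiagonal n) ≤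
      (lieStabilizer A).map (LinearMap.fst ℝ _ _) := by
    rintro _ ⟨c, hc, rfl⟩
    obtain ⟨Y, hY, hcY⟩ := exists_mem_su_imDiagonal_mul_eq hB (mem_sumZero.1 hc)
    refine ⟨(conjU (imDiagonal n c), Y), mem_lieStabilizer.2 ⟨?_, hY, ?_⟩, rfl⟩
    · simpa only [conjU, LinearMap.comp_apply, LinearMap.mulLeft_apply,
        LinearMap.mulRight_apply, Matrix.mul_assoc] using
        unitary_conj_mem_su hU (imDiagonal_mem_su (mem_sumZero.1 hc))
    · simp only [conjU, LinearMap.comp_apply, LinearMap.mulLeft_apply, LinearMap.mulRight_apply]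
      rw [Matrix.mul_assoc, Matrix.mul_assoc, hcY, ← Matrix.mul_assoc, ← Matrix.mul_assoc,
        Unitary.mul_star_self_of_mem hU, Matrix.one_mul]
  calc Fintype.card n - 1 = finrank ℝ (sumZero n) := finrank_sumZero.symm
    _ = finrank ℝ ((sumZero n).map (conjU ∘ₗ imDiagonal n)) :=
      (Submodule.equivMapOfInjective _
        (show Function.Injective (conjU ∘ imDiagonal n) from hconjU.comp imDiagonal_injective)
        _).finrank_eq
    _ ≤ finrank ℝ ((lieStabilizer A).map (LinearMap.fst ℝ _ _)) := Submodule.finrank_mono hle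
    _ ≤ finrank ℝ (lieStabilizer A) := Submodule.finrank_map_le _ _

theorem eq_imDiagonal_of_mul_diagonal_eq {d : n → ℝ} (hd : Function.Injective d)
    (hpos : ∀ i, 0 < d i) {X Y : Matrix n n ℂ} (hX : Xᴴ = -X) (hY : Yᴴ = -Y)
    (h : X * diagonal (fun j => (d j : ℂ)) = diagonal (fun j => (d j : ℂ)) * Y) :
    X = imDiagonal n (fun i => (X i i).im) ∧ Y = X := by
  have hd0 : ∀ i, (d i : ℂ) ≠ 0 := fun i => Complex.ofReal_ne_zero.2 (hpos i).ne'
  have hXY : ∀ i j, X i j * d j = d i * Y i j := fun i j => by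
    simpa [mul_diagonal, diagonal_mul] using congrFun (congrFun h i) j
  have hYX : ∀ i j, X i j * d i = d j * Y i j := fun i j => by
    have := congrArg star (hXY j i)
    have hXji : star (X j i) = -X i j := congrFun (congrFun hX i) j
    have hYji : star (Y j i) = -Y i j := congrFun (congrFun hY i) j
    simp only [star_mul', hXji, hYji, Complex.star_def, Complex.conj_ofReal] at this
    linear_combination -this
  have hoff : ∀ i j, i ≠ j → X i j = 0 ∧ Y i j = 0 := by
    intro i j hij
    have hsq : ((d i : ℂ) ^ 2 - (d j : ℂ) ^ 2) ≠ 0 := by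
      rw [sub_ne_zero]
      exact_mod_cast fun h => hij (hd ((sq_eq_sq₀ (hpos i).le (hpos j).le).1 h))
    have hY0 : Y i j = 0 := by
      refine (mul_eq_zero.1 ?_).resolve_left hsq
      linear_combination (d j : ℂ) * hYX i j - (d i : ℂ) * hXY i j
    refine ⟨?_, hY0⟩
    simpa [hY0, hd0 j] using hXY i j
  have hdiag : ∀ i, Y i i = X i i := fun i =>
    mul_left_cancel₀ (hd0 i) (by linear_combination -(hXY i i))
  refine ⟨?_, ?_⟩
  · ext i j
    rcases eq_or_ne i j with rfl | hij
    · have hre : (X i i).re = 0 := by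
        have := congrArg Complex.re (congrFun (congrFun hX i) i)
        simp only [conjTranspose_apply, Complex.star_def, Complex.conj_re, Matrix.neg_apply,
          Complex.neg_re] at this
        linarith
      simp [imDiagonal_apply, Complex.ext_iff, hre]
    · simp [imDiagonal_apply, hij, (hoff i j hij).1]
  · ext i j
    rcases eq_or_ne i j with rfl | hij
    · exact hdiag i
    · rw [(hoff i j hij).1, (hoff i j hij).2]

theorem finrank_lieStabilizer_diagonal_le [Nonempty n] {d : n → ℝ} (hd : Function.Injective d)
    (hpos : ∀ i, 0 < d i) :
    finrank ℝ (lieStabilizer (diagonal fun j => (d j : ℂ))) ≤ Fintype.card n - 1 := by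
  have hle : lieStabilizer (diagonal fun j => (d j : ℂ)) ≤
      (sumZero n).map ((imDiagonal n).prod (imDiagonal n)) := by
    rintro ⟨X, Y⟩ hXY
    obtain ⟨hX, hY, hXY⟩ := mem_lieStabilizer.1 hXY
    dsimp only at hX hY hXY
    obtain ⟨hXdiag, hYX⟩ := eq_imDiagonal_of_mul_diagonal_eq hd hpos hX.1 hY.1 hXY
    refine ⟨fun i => (X i i).im, mem_sumZero.2 ?_, ?_⟩
    · simpa [trace, Complex.im_sum] using congrArg Complex.im hX.2
    · rw [hYX]
      exact Prod.ext hXdiag.symm hXdiag.symm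
  calc _ ≤ finrank ℝ ((sumZero n).map ((imDiagonal n).prod (imDiagonal n))) :=
        Submodule.finrank_mono hle
    _ ≤ finrank ℝ (sumZero n) := Submodule.finrank_map_le _ _
    _ = Fintype.card n - 1 := finrank_sumZero

end

section

variable {m : ℕ}

theorem span_stabSet17 (A : Matrix (Fin m) (Fin m) ℂ) :
    Submodule.span ℝ (stabSet17 A) = lieStabilizer A := by
  convert Submodule.span_eq (lieStabilizer A)
  ext p
  simp [stabSet17, mem_lieStabilizer, mem_su, and_assoc]

theorem span_tangSet17 (A : Matrix (Fin m) (Fin m) ℂ) :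
    Submodule.span ℝ (tangSet17 A) = ((su (Fin m)).prod (su (Fin m))).map (intertwiner A) := by
  convert Submodule.span_eq (((su (Fin m)).prod (su (Fin m))).map (intertwiner A))
  ext B
  constructor
  · rintro ⟨X, Y, hX, hXt, hY, hYt, rfl⟩
    exact ⟨(X, Y), ⟨⟨hX, hXt⟩, hY, hYt⟩, rfl⟩
  · rintro ⟨⟨X, Y⟩, ⟨⟨hX, hXt⟩, hY, hYt⟩, rfl⟩
    exact ⟨X, Y, hX, hXt, hY, hYt, rfl⟩

end

theorem stmt17 (m : ℕ) (hm : 2 ≤ m) :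
    IsLeast {d : ℕ | ∃ A : Matrix (Fin m) (Fin m) ℂ,
        d = Module.finrank ℝ (Submodule.span ℝ (stabSet17 A))}
      (m - 1) ∧
    IsGreatest {d : ℕ | ∃ A : Matrix (Fin m) (Fin m) ℂ,
        d = Module.finrank ℝ (Submodule.span ℝ (tangSet17 A))}
      (2 * m ^ 2 - (m + 1)) := by
  have : Nonempty (Fin m) := ⟨⟨0, by omega⟩⟩
  have hlower (A : Matrix (Fin m) (Fin m) ℂ) : m - 1 ≤ finrank ℝ (lieStabilizer A) := by
    simpa using card_sub_one_le_finrank_lieStabilizer A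
  have hsum (A : Matrix (Fin m) (Fin m) ℂ) :
      finrank ℝ (Submodule.span ℝ (tangSet17 A)) + finrank ℝ (lieStabilizer A) =
        2 * (m ^ 2 - 1) := by
    rw [span_tangSet17]
    simpa using finrank_map_intertwiner_add_finrank_lieStabilizer A
  let d : Fin m → ℝ := fun i => i + 1
  let A₀ : Matrix (Fin m) (Fin m) ℂ := diagonal fun i => (d i : ℂ)
  have hA₀ : finrank ℝ (lieStabilizer A₀) = m - 1 := by
    refine le_antisymm ?_ (hlower _)
    simpa using finrank_lieStabilizer_diagonal_le (d := d)
      (fun i j h => Fin.ext (by simpa [d] using h)) (fun i => by positivity)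
  have hm2 : m ≤ m ^ 2 := Nat.le_self_pow two_ne_zero m
  refine ⟨⟨⟨A₀, ?_⟩, ?_⟩, ⟨⟨A₀, ?_⟩, ?_⟩⟩
  · rw [span_stabSet17, hA₀]
  · rintro _ ⟨A, rfl⟩
    rw [span_stabSet17]
    exact hlower A
  · have := hsum A₀
    omega
  · rintro _ ⟨A, rfl⟩
    have := hsum A
    have := hlower A
    omega
end

section
/- Let n ≥ 2 be an integer and let Sym be the real vector space of symmetric complex n×n matrices (Aᵀ = A), of real dimension n(n+1). SU(n) acts on Sym by g·A = g A gᵀ. For A ∈ Sym let S(A) = {X ∈ 𝔰𝔲(n) : X·A + A·Xᵀ = 0} and T(A) = {X·A + A·Xᵀ : X ∈ 𝔰𝔲(n)}. Then the minimum over all A ∈ Sym of dim_ℝ S(A) equals 0, and the maximum over all A ∈ Sym of dim_ℝ T(A) equals n² − 1. Equivalently, the representation of SU(n) on S²ℂⁿ has cohomogeneity n+1; in particular, for n = 5, 6, 7 it has cohomogeneity 6, 7, 8 respectively. -/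
open Matrix

/-- `S(A) = {X ∈ 𝔰𝔲(n) : X·A + A·Xᵀ = 0}` (traceless skew-Hermitian matrices). -/
def stabSet18 {n : ℕ} (A : Matrix (Fin n) (Fin n) ℂ) :
    Set (Matrix (Fin n) (Fin n) ℂ) :=
  {X | Xᴴ = -X ∧ X.trace = 0 ∧ X * A + A * Xᵀ = 0}

/-- `T(A) = {X·A + A·Xᵀ : X ∈ 𝔰𝔲(n)}`. -/
def tangSet18 {n : ℕ} (A : Matrix (Fin n) (Fin n) ℂ) :
    Set (Matrix (Fin n) (Fin n) ℂ) :=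
  {B | ∃ X : Matrix (Fin n) (Fin n) ℂ, Xᴴ = -X ∧ X.trace = 0 ∧ B = X * A + A * Xᵀ}

namespace Aux18

variable (n : ℕ)

local notation "M" => Matrix (Fin n) (Fin n) ℂ

noncomputable def pSkew : M →ₗ[ℝ] M where
  toFun X := X - Xᴴ
  map_add' X Y := by simp [conjTranspose_add]; abel
  map_smul' r X := by simp [conjTranspose_smul, smul_sub]

noncomputable def skewH : Submodule ℝ M where
  carrier := {X | Xᴴ = -X}
  add_mem' := by
    intro a b ha hb
    simp only [Set.mem_setOf_eq] at *
    simp [conjTranspose_add, ha, hb]; abel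
  zero_mem' := by simp
  smul_mem' := by
    intro r X h
    simp only [Set.mem_setOf_eq] at *
    simp [conjTranspose_smul, h]

noncomputable def hermS : Submodule ℝ M where
  carrier := {X | Xᴴ = X}
  add_mem' := by
    intro a b ha hb
    simp only [Set.mem_setOf_eq] at *
    simp [conjTranspose_add, ha, hb]
  zero_mem' := by simp
  smul_mem' := by
    intro r X h
    simp only [Set.mem_setOf_eq] at *
    simp [conjTranspose_smul, h]

lemma ker_pSkew : LinearMap.ker (pSkew n) = hermS n := by
  ext X
  simp only [LinearMap.mem_ker, pSkew, LinearMap.coe_mk, AddHom.coe_mk, sub_eq_zero]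
  exact ⟨fun h => h.symm, fun h => h.symm⟩

lemma range_pSkew : LinearMap.range (pSkew n) = skewH n := by
  apply le_antisymm
  · rintro _ ⟨X, rfl⟩
    show (X - Xᴴ)ᴴ = -(X - Xᴴ)
    simp [conjTranspose_sub]
  · intro X hX
    refine ⟨(1/2 : ℝ) • X, ?_⟩
    show (1/2 : ℝ) • X - ((1/2 : ℝ) • X)ᴴ = X
    rw [conjTranspose_smul, star_trivial, hX, smul_neg, sub_neg_eq_add, ← add_smul]
    norm_num

noncomputable def hermEquiv : hermS n ≃ₗ[ℝ] skewH n where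
  toFun X := ⟨Complex.I • X.1, by
    have hX : (X : M)ᴴ = (X : M) := X.2
    show (Complex.I • (X : M))ᴴ = -(Complex.I • (X : M))
    rw [conjTranspose_smul, Complex.star_def, Complex.conj_I, hX, neg_smul]⟩
  invFun Y := ⟨(-Complex.I) • Y.1, by
    have hY : (Y : M)ᴴ = -(Y : M) := Y.2
    show ((-Complex.I) • (Y : M))ᴴ = (-Complex.I) • (Y : M)
    rw [conjTranspose_smul, star_neg, Complex.star_def, Complex.conj_I, neg_neg, hY]
    simp⟩
  left_inv X := by
    ext1
    show (-Complex.I) • (Complex.I • (X : M)) = X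
    rw [smul_smul]; norm_num
  right_inv Y := by
    ext1
    show Complex.I • ((-Complex.I) • (Y : M)) = Y
    rw [smul_smul]; norm_num
  map_add' X Y := by ext1; exact smul_add _ _ _
  map_smul' r X := by ext1; exact smul_comm _ _ _

lemma finrank_M : Module.finrank ℝ M = n * n * 2 := by
  rw [Module.finrank_matrix]; simp [Complex.finrank_real_complex]

lemma finrank_skewH : Module.finrank ℝ (skewH n) = n ^ 2 := by
  have h1 := LinearMap.finrank_range_add_finrank_ker (pSkew n)
  rw [range_pSkew, ker_pSkew, finrank_M] at h1
  have h2 : Module.finrank ℝ (hermS n) = Module.finrank ℝ (skewH n) :=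
    (hermEquiv n).finrank_eq
  rw [h2] at h1
  have h3 : n ^ 2 = n * n := sq n
  omega

noncomputable def tIm : skewH n →ₗ[ℝ] ℝ :=
  Complex.imLm.comp ((Matrix.traceLinearMap (Fin n) ℝ ℂ).comp (skewH n).subtype)

lemma tIm_surjective (hn : 0 < n) : Function.Surjective (tIm n) := by
  intro r
  have hmem : (Complex.I • (1 : M)) ∈ skewH n := by
    show (Complex.I • (1 : M))ᴴ = -(Complex.I • (1 : M))
    rw [conjTranspose_smul, Complex.star_def, Complex.conj_I, conjTranspose_one, neg_smul]
  refine ⟨(r / n) • ⟨Complex.I • (1 : M), hmem⟩, ?_⟩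
  simp only [tIm, LinearMap.comp_apply, Submodule.coe_subtype, SetLike.val_smul,
    Matrix.traceLinearMap_apply]
  rw [trace_smul, trace_smul, trace_one]
  have hn' : (n : ℝ) ≠ 0 := Nat.cast_ne_zero.mpr hn.ne'
  simp [Complex.real_smul, Complex.mul_im, hn']
  

noncomputable def su : Submodule ℝ M :=
  Submodule.map (skewH n).subtype (LinearMap.ker (tIm n))

lemma mem_su {X : M} : X ∈ su n ↔ Xᴴ = -X ∧ X.trace = 0 := by
  constructor
  · rintro ⟨Y, hker, rfl⟩
    have hY : ((Y : M))ᴴ = -(Y : M) := Y.2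
    refine ⟨hY, ?_⟩
    simp only [LinearMap.mem_ker, tIm, LinearMap.comp_apply, Submodule.coe_subtype,
      Matrix.traceLinearMap_apply, Complex.imLm_coe] at hker
    have h1 : star (Y : M).trace = -(Y : M).trace := by
      rw [← trace_conjTranspose, hY, trace_neg]
    have hre : (Y : M).trace.re = 0 := by
      have := congrArg Complex.re h1
      simp only [Complex.star_def, Complex.conj_re, Complex.neg_re] at this
      linarith
    exact Complex.ext hre hker
  · rintro ⟨h1, h2⟩
    refine ⟨⟨X, h1⟩, ?_, rfl⟩
    simp only [LinearMap.mem_ker, tIm, LinearMap.comp_apply, Submodule.coe_subtype,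
      Matrix.traceLinearMap_apply, Complex.imLm_coe]
    simp [h2]

lemma finrank_su (hn : 0 < n) : Module.finrank ℝ (su n) = n ^ 2 - 1 := by
  rw [su, Submodule.finrank_map_subtype_eq]
  have h1 := LinearMap.finrank_range_add_finrank_ker (tIm n)
  rw [finrank_skewH, LinearMap.range_eq_top.mpr (tIm_surjective n hn), finrank_top,
    Module.finrank_self] at h1
  omega

noncomputable def phi (A : M) : M →ₗ[ℝ] M where
  toFun X := X * A + A * Xᵀ
  map_add' X Y := by simp [transpose_add, add_mul, mul_add]; abel
  map_smul' r X := by simp [transpose_smul, smul_add, Matrix.smul_mul, Matrix.mul_smul]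

lemma tangSet_eq (A : M) :
    tangSet18 A = ↑(Submodule.map (phi n A) (su n)) := by
  ext B
  simp only [tangSet18, Set.mem_setOf_eq, SetLike.mem_coe, Submodule.mem_map, mem_su]
  constructor
  · rintro ⟨X, h1, h2, rfl⟩; exact ⟨X, ⟨h1, h2⟩, rfl⟩
  · rintro ⟨X, ⟨h1, h2⟩, rfl⟩; exact ⟨X, h1, h2, rfl⟩

noncomputable def A0 : M := Matrix.diagonal (fun i => (((i : ℕ) + 1 : ℝ) : ℂ))

lemma A0_symm : (A0 n)ᵀ = A0 n := diagonal_transpose _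

lemma key_zero {X : M} (h1 : Xᴴ = -X) (h2 : X * A0 n + A0 n * Xᵀ = 0) : X = 0 := by
  ext i j
  have hij := congrFun (congrFun h2 i) j
  simp only [A0, Matrix.add_apply, Matrix.mul_diagonal, Matrix.diagonal_mul,
    Matrix.transpose_apply, Matrix.zero_apply] at hij
  have hsk : X j i = -(starRingEnd ℂ) (X i j) := by
    have h := congrFun (congrFun h1 j) i
    simp only [conjTranspose_apply, Matrix.neg_apply, Complex.star_def] at h
    linear_combination h
  by_cases hij' : i = j
  · subst hij'
    have hne : ((((i : ℕ) + 1 : ℝ)) : ℂ) ≠ 0 := Complex.ofReal_ne_zero.mpr (by positivity)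
    have h2c : ((2 : ℂ) * ((((i : ℕ) + 1 : ℝ)) : ℂ)) * X i i = 0 := by linear_combination hij
    rcases mul_eq_zero.mp h2c with h | h
    · exact absurd h (mul_ne_zero two_ne_zero hne)
    · exact h
  · rw [hsk] at hij
    set a : ℂ := (((i : ℕ) + 1 : ℝ) : ℂ) with ha
    set b : ℂ := (((j : ℕ) + 1 : ℝ) : ℂ) with hb
    set x : ℂ := X i j with hx
    have e1 : x * b = a * (starRingEnd ℂ) x := by linear_combination hij
    have e2 : (starRingEnd ℂ) x * b = a * x := by
      have h' := congrArg (starRingEnd ℂ) e1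
      simpa [ha, hb, Complex.conj_ofReal] using h'
    have e3 : (b ^ 2 - a ^ 2) * x = 0 := by linear_combination b * e1 + a * e2
    have hba : b ^ 2 - a ^ 2 ≠ 0 := by
      rw [sub_ne_zero, ha, hb]
      intro h
      have h' : (((j : ℕ) + 1 : ℝ)) ^ 2 = (((i : ℕ) + 1 : ℝ)) ^ 2 := by exact_mod_cast h
      have h'' : ((j : ℕ) + 1) ^ 2 = ((i : ℕ) + 1) ^ 2 := by exact_mod_cast h'
      have h3 := Nat.pow_left_injective (n := 2) (by norm_num) h''
      exact hij' (Fin.ext (by omega))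
    rcases mul_eq_zero.mp e3 with h | h
    · exact absurd h hba
    · exact h

lemma stab_eq : stabSet18 (A0 n) = {0} := by
  ext X
  simp only [stabSet18, Set.mem_setOf_eq, Set.mem_singleton_iff]
  constructor
  · rintro ⟨h1, _, h3⟩; exact key_zero n h1 h3
  · rintro rfl; simp

lemma psi_inj : Function.Injective ((phi n (A0 n)).comp (su n).subtype) := by
  rw [injective_iff_map_eq_zero]
  intro X hX
  simp only [LinearMap.comp_apply, Submodule.coe_subtype] at hX
  have h1 := (mem_su n).mp X.2
  exact Subtype.ext (key_zero n h1.1 hX)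

end Aux18

theorem stmt18 (n : ℕ) (hn : 2 ≤ n) :
    IsLeast {d : ℕ | ∃ A : Matrix (Fin n) (Fin n) ℂ, Aᵀ = A ∧
        d = Module.finrank ℝ (Submodule.span ℝ (stabSet18 A))}
      0 ∧
    IsGreatest {d : ℕ | ∃ A : Matrix (Fin n) (Fin n) ℂ, Aᵀ = A ∧
        d = Module.finrank ℝ (Submodule.span ℝ (tangSet18 A))}
      (n ^ 2 - 1) := by
  have hn0 : 0 < n := by omega
  constructor
  · constructor
    · refine ⟨Aux18.A0 n, Aux18.A0_symm n, ?_⟩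
      rw [Aux18.stab_eq, Submodule.span_zero_singleton]
      exact (finrank_bot ℝ _).symm
    · intro d _
      exact Nat.zero_le d
  · constructor
    · refine ⟨Aux18.A0 n, Aux18.A0_symm n, ?_⟩
      rw [Aux18.tangSet_eq, Submodule.span_eq]
      have h1 : Submodule.map (Aux18.phi n (Aux18.A0 n)) (Aux18.su n)
          = LinearMap.range ((Aux18.phi n (Aux18.A0 n)).comp (Aux18.su n).subtype) := by
        rw [LinearMap.range_comp, Submodule.range_subtype]
      rw [h1, LinearMap.finrank_range_of_inj (Aux18.psi_inj n), Aux18.finrank_su n hn0]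
    · rintro d ⟨A, hA, rfl⟩
      rw [Aux18.tangSet_eq, Submodule.span_eq]
      calc Module.finrank ℝ (Submodule.map (Aux18.phi n A) (Aux18.su n))
          ≤ Module.finrank ℝ (Aux18.su n) := Submodule.finrank_map_le _ _
        _ = n ^ 2 - 1 := Aux18.finrank_su n hn0
end
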